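/- arXiv:1704.02634 — 4 statements merged into one kernel-verified Lean document; each statement's English description precedes it below -/
import Mathlib

section
/- For p > 1 with p' = p/(p-1), define A(λ) = p'·((1 - 1/p')·log(1 - 1/p') - (1 - λ/p')·log(1 - λ/p') - (1 - (1-λ)/p')·log(1 - (1-λ)/p')) and H(λ) = -λ·log λ - (1-λ)·log(1-λ). Then the supremum of A(λ)/H(λ) over λ ∈ (0,1) is attained at λ = 1/2, i.e., A(λ)/H(λ) ≤ A(1/2)/H(1/2) for all λ ∈ (0,1). -/
open Real Filter Finset

namespace Stmt2Aux

/-- `S u n = 1 - u^(n+2) - (1-u)^(n+2)`. -/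
def S (u : ℝ) (n : ℕ) : ℝ := 1 - u ^ (n + 2) - (1 - u) ^ (n + 2)

lemma S_pos {u : ℝ} (h0 : 0 < u) (h1 : u < 1) (n : ℕ) : 0 < S u n := by
  have hv : 0 < 1 - u := by linarith
  have h1' : u ^ (n + 2) ≤ u ^ 2 := pow_le_pow_of_le_one h0.le h1.le (by omega)
  have h2' : (1 - u) ^ (n + 2) ≤ (1 - u) ^ 2 := pow_le_pow_of_le_one hv.le (by linarith) (by omega)
  have h3 : u ^ 2 + (1 - u) ^ 2 < 1 := by nlinarith
  unfold S; linarith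

lemma half_step {u : ℝ} (h0 : 0 ≤ u) (h1 : u ≤ 1) (m : ℕ) :
    u ^ (m + 1) + (1 - u) ^ (m + 1) ≤ 2 * (u ^ (m + 2) + (1 - u) ^ (m + 2)) := by
  have hv0 : (0 : ℝ) ≤ 1 - u := by linarith
  have key : 2 * (u ^ (m + 2) + (1 - u) ^ (m + 2)) - (u ^ (m + 1) + (1 - u) ^ (m + 1))
      = (2 * u - 1) * (u ^ (m + 1) - (1 - u) ^ (m + 1)) := by ring
  rcases le_total u (1 / 2) with h | h
  · have hle : u ≤ 1 - u := by linarith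
    have hp : u ^ (m + 1) ≤ (1 - u) ^ (m + 1) := pow_le_pow_left₀ h0 hle _
    nlinarith
  · have hle : 1 - u ≤ u := by linarith
    have hp : (1 - u) ^ (m + 1) ≤ u ^ (m + 1) := pow_le_pow_left₀ hv0 hle _
    nlinarith

lemma key_poly {u : ℝ} (h0 : 0 ≤ u) (h1 : u ≤ 1) (m : ℕ) :
    1 - u ^ (m + 2) - (1 - u) ^ (m + 2)
      ≤ (2 ^ (m + 2) - 2) * (u * (1 - u) * (u ^ (m + 1) + (1 - u) ^ (m + 1))) := by
  induction m with
  | zero => exact le_of_eq (by ring)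
  | succ m ih =>
    have hv0 : (0 : ℝ) ≤ 1 - u := by linarith
    have hs := half_step h0 h1 m
    have huv : (0 : ℝ) ≤ u * (1 - u) := mul_nonneg h0 hv0
    have h2 : (0 : ℝ) ≤ 2 ^ (m + 2) - 1 := by
      have h4 : (1 : ℝ) ≤ 2 ^ (m + 2) := by
        simpa using pow_le_pow_left₀ (by norm_num : (0:ℝ) ≤ 1) (by norm_num : (1:ℝ) ≤ 2) (m + 2)
      linarith
    have hid : 1 - u ^ (m + 3) - (1 - u) ^ (m + 3)
        = (1 - u ^ (m + 2) - (1 - u) ^ (m + 2))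
          + u * (1 - u) * (u ^ (m + 1) + (1 - u) ^ (m + 1)) := by ring
    show 1 - u ^ (m + 3) - (1 - u) ^ (m + 3)
        ≤ (2 ^ (m + 3) - 2) * (u * (1 - u) * (u ^ (m + 2) + (1 - u) ^ (m + 2)))
    have step1 : 1 - u ^ (m + 3) - (1 - u) ^ (m + 3)
        ≤ (2 ^ (m + 2) - 1) * (u * (1 - u) * (u ^ (m + 1) + (1 - u) ^ (m + 1))) := by
      rw [hid]
      have e : (2 ^ (m + 2) - 1 : ℝ) * (u * (1 - u) * (u ^ (m + 1) + (1 - u) ^ (m + 1)))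
          = (2 ^ (m + 2) - 2) * (u * (1 - u) * (u ^ (m + 1) + (1 - u) ^ (m + 1)))
            + u * (1 - u) * (u ^ (m + 1) + (1 - u) ^ (m + 1)) := by ring
      rw [e]
      linarith
    have step2 : (2 ^ (m + 2) - 1 : ℝ) * (u * (1 - u) * (u ^ (m + 1) + (1 - u) ^ (m + 1)))
        ≤ (2 ^ (m + 2) - 1) * (u * (1 - u) * (2 * (u ^ (m + 2) + (1 - u) ^ (m + 2)))) :=
      mul_le_mul_of_nonneg_left (mul_le_mul_of_nonneg_left hs huv) h2
    have e2 : (2 ^ (m + 2) - 1 : ℝ) * (u * (1 - u) * (2 * (u ^ (m + 2) + (1 - u) ^ (m + 2))))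
        = (2 ^ (m + 3) - 2) * (u * (1 - u) * (u ^ (m + 2) + (1 - u) ^ (m + 2))) := by ring
    exact step1.trans (step2.trans_eq e2)

lemma consec {u : ℝ} (h0 : 0 ≤ u) (h1 : u ≤ 1) (m : ℕ) :
    S u m * S (1 / 2) (m + 1) ≤ S u (m + 1) * S (1 / 2) m := by
  have hv0 : (0 : ℝ) ≤ 1 - u := by linarith
  set X : ℝ := (1 / 2 : ℝ) ^ (m + 2) with hXdef
  have hXpos : 0 < X := by positivity
  have hX2 : X * 2 ^ (m + 2) = 1 := by
    rw [hXdef, ← mul_pow]; norm_num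
  have hkey := key_poly h0 h1 m
  have hkey' : X * (1 - u ^ (m + 2) - (1 - u) ^ (m + 2))
      ≤ (1 - 2 * X) * (u * (1 - u) * (u ^ (m + 1) + (1 - u) ^ (m + 1))) := by
    have h5 := mul_le_mul_of_nonneg_left hkey hXpos.le
    calc X * (1 - u ^ (m + 2) - (1 - u) ^ (m + 2))
        ≤ X * ((2 ^ (m + 2) - 2) * (u * (1 - u) * (u ^ (m + 1) + (1 - u) ^ (m + 1)))) := h5
      _ = (X * 2 ^ (m + 2) - 2 * X) * (u * (1 - u) * (u ^ (m + 1) + (1 - u) ^ (m + 1))) := by ring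
      _ = (1 - 2 * X) * (u * (1 - u) * (u ^ (m + 1) + (1 - u) ^ (m + 1))) := by rw [hX2]
  have hS1 : S (1 / 2) m = 1 - 2 * X := by
    simp only [S, hXdef]; ring
  have hS2 : S (1 / 2) (m + 1) = 1 - X := by
    simp only [S, hXdef]; ring
  rw [hS1, hS2]
  show (1 - u ^ (m + 2) - (1 - u) ^ (m + 2)) * (1 - X)
      ≤ (1 - u ^ (m + 1 + 2) - (1 - u) ^ (m + 1 + 2)) * (1 - 2 * X)
  have hG : (1 - u ^ (m + 1 + 2) - (1 - u) ^ (m + 1 + 2)) * (1 - 2 * X)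
      - (1 - u ^ (m + 2) - (1 - u) ^ (m + 2)) * (1 - X)
      = (1 - 2 * X) * (u * (1 - u) * (u ^ (m + 1) + (1 - u) ^ (m + 1)))
        - X * (1 - u ^ (m + 2) - (1 - u) ^ (m + 2)) := by ring
  linarith

lemma mono {u : ℝ} (h0 : 0 < u) (h1 : u < 1) {n m : ℕ} (h : n ≤ m) :
    S u n * S (1 / 2) m ≤ S u m * S (1 / 2) n := by
  have pτ : ∀ k, 0 < S (1 / 2) k := S_pos (by norm_num) (by norm_num)
  have pσ : ∀ k, 0 < S u k := S_pos h0 h1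
  induction m, h using Nat.le_induction with
  | base => exact le_rfl
  | succ m hnm ih =>
    have c := consec h0.le h1.le m
    have h2 : (S u n * S (1 / 2) (m + 1)) * (S u m * S (1 / 2) m)
        ≤ (S u (m + 1) * S (1 / 2) n) * (S u m * S (1 / 2) m) := by
      calc (S u n * S (1 / 2) (m + 1)) * (S u m * S (1 / 2) m)
          = (S u n * S (1 / 2) m) * (S u m * S (1 / 2) (m + 1)) := by ring
        _ ≤ (S u m * S (1 / 2) n) * (S u m * S (1 / 2) (m + 1)) :=
            mul_le_mul_of_nonneg_right ih (mul_nonneg (pσ m).le (pτ (m + 1)).le)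
        _ ≤ (S u m * S (1 / 2) n) * (S u (m + 1) * S (1 / 2) m) :=
            mul_le_mul_of_nonneg_left c (mul_nonneg (pσ m).le (pτ n).le)
        _ = (S u (m + 1) * S (1 / 2) n) * (S u m * S (1 / 2) m) := by ring
    exact le_of_mul_le_mul_right h2 (mul_pos (pσ m) (pτ m))

end Stmt2Aux

namespace Stmt2AuxB

lemma hasSum_series {x : ℝ} (hx : |x| < 1) :
    HasSum (fun n : ℕ => x ^ (n + 2) / (((n : ℝ) + 2) * ((n : ℝ) + 1)))
      ((1 - x) * Real.log (1 - x) + x) := by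
  have h1 := Real.hasSum_pow_div_log_of_abs_lt_one hx
  have h2 := h1.mul_left x
  have h3 := (hasSum_nat_add_iff' (f := fun n : ℕ => x ^ (n + 1) / ((n : ℝ) + 1)) 1).mpr h1
  have h4 := h2.sub h3
  have hval : x * -Real.log (1 - x) - (-Real.log (1 - x) - ∑ i ∈ range 1, x ^ (i + 1) / ((i : ℝ) + 1))
      = (1 - x) * Real.log (1 - x) + x := by
    rw [Finset.sum_range_one]
    push_cast
    ring
  rw [hval] at h4
  refine h4.congr_fun fun n => ?_
  show x ^ (n + 2) / (((n : ℝ) + 2) * ((n : ℝ) + 1))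
      = x * (x ^ (n + 1) / ((n : ℝ) + 1)) - x ^ (n + 1 + 1) / ((↑(n + 1) : ℝ) + 1)
  have hn1 : ((n : ℝ) + 1) ≠ 0 := by positivity
  have hn2 : ((n : ℝ) + 2) ≠ 0 := by positivity
  push_cast
  field_simp
  ring

lemma hasSum_w : HasSum (fun n : ℕ => 1 / (((n : ℝ) + 2) * ((n : ℝ) + 1))) 1 := by
  have hnn : ∀ n : ℕ, (0 : ℝ) ≤ 1 / (((n : ℝ) + 2) * ((n : ℝ) + 1)) := fun n => by positivity
  rw [hasSum_iff_tendsto_nat_of_nonneg hnn]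
  have hps : ∀ N : ℕ, ∑ i ∈ range N, 1 / (((i : ℝ) + 2) * ((i : ℝ) + 1)) = 1 - 1 / ((N : ℝ) + 1) := by
    intro N
    have : ∀ i : ℕ, 1 / (((i : ℝ) + 2) * ((i : ℝ) + 1))
        = (fun k : ℕ => 1 / ((k : ℝ) + 1)) i - (fun k : ℕ => 1 / ((k : ℝ) + 1)) (i + 1) := by
      intro i
      have h1 : ((i : ℝ) + 1) ≠ 0 := by positivity
      have h2 : ((i : ℝ) + 2) ≠ 0 := by positivity
      push_cast
      field_simp
      ring
    rw [Finset.sum_congr rfl fun i _ => this i, Finset.sum_range_sub' (fun k : ℕ => 1 / ((k : ℝ) + 1)) N]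
    norm_num
  simp only [hps]
  have : Tendsto (fun n : ℕ => 1 / ((n : ℝ) + 1)) atTop (nhds 0) := tendsto_one_div_add_atTop_nhds_zero_nat
  have h2 : Tendsto (fun N : ℕ => 1 - 1 / ((N : ℝ) + 1)) atTop (nhds (1 - 0)) :=
    tendsto_const_nhds.sub (by exact_mod_cast this)
  simpa using h2

end Stmt2AuxB

open Stmt2Aux Stmt2AuxB in
/-- For `p > 1` with `p' = p/(p-1)`, the supremum of `A(λ)/H(λ)` over `λ ∈ (0,1)` is
attained at `λ = 1/2`, where `H` is the binary entropy and `A` is as in the paper. -/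
theorem stmt2 (p : ℝ) (hp : 1 < p) (p' : ℝ) (hp' : p' = p / (p - 1))
    (A H : ℝ → ℝ)
    (hA : ∀ l, A l = p' * ((1 - 1 / p') * Real.log (1 - 1 / p')
        - (1 - l / p') * Real.log (1 - l / p')
        - (1 - (1 - l) / p') * Real.log (1 - (1 - l) / p')))
    (hH : ∀ l, H l = -l * Real.log l - (1 - l) * Real.log (1 - l)) :
    ∀ l ∈ Set.Ioo (0 : ℝ) 1, A l / H l ≤ A (1 / 2) / H (1 / 2) := by
  classical
  intro l hl
  obtain ⟨hl0, hl1⟩ := hl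
  have hpm : (0 : ℝ) < p - 1 := by linarith
  have hp'1 : 1 < p' := by
    rw [hp', lt_div_iff₀ hpm]; linarith
  have hp'0 : 0 < p' := by linarith
  set t : ℝ := 1 / p' with ht
  have ht0 : 0 < t := by positivity
  have ht1 : t < 1 := by
    rw [ht, div_lt_one hp'0]; linarith
  -- series representation of A
  have hAsum : ∀ l' : ℝ, 0 ≤ l' → l' ≤ 1 →
      HasSum (fun n : ℕ => p' * t ^ (n + 2) * (1 / (((n : ℝ) + 2) * ((n : ℝ) + 1))) * S l' n)
        (A l') := by
    intro l' h0' h1'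
    have hx0 : |t| < 1 := by rw [abs_of_nonneg ht0.le]; exact ht1
    have hxa : |l' * t| < 1 := by
      rw [abs_of_nonneg (mul_nonneg h0' ht0.le)]
      calc l' * t ≤ 1 * t := mul_le_mul_of_nonneg_right h1' ht0.le
        _ < 1 := by rw [one_mul]; exact ht1
    have hxb : |(1 - l') * t| < 1 := by
      rw [abs_of_nonneg (mul_nonneg (by linarith) ht0.le)]
      calc (1 - l') * t ≤ 1 * t := mul_le_mul_of_nonneg_right (by linarith) ht0.le
        _ < 1 := by rw [one_mul]; exact ht1
    have h0 := hasSum_series hx0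
    have ha := hasSum_series hxa
    have hb := hasSum_series hxb
    have hcomb := ((h0.sub ha).sub hb).mul_left p'
    have hval : p' * ((1 - t) * Real.log (1 - t) + t
          - ((1 - l' * t) * Real.log (1 - l' * t) + l' * t)
          - ((1 - (1 - l') * t) * Real.log (1 - (1 - l') * t) + (1 - l') * t)) = A l' := by
      rw [hA l']
      have e1 : 1 - 1 / p' = 1 - t := by rw [ht]
      have e2 : 1 - l' / p' = 1 - l' * t := by rw [ht]; ring
      have e3 : 1 - (1 - l') / p' = 1 - (1 - l') * t := by rw [ht]; ring
      rw [e1, e2, e3]; ring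
    rw [hval] at hcomb
    refine hcomb.congr_fun fun n => ?_
    show p' * t ^ (n + 2) * (1 / (((n : ℝ) + 2) * ((n : ℝ) + 1))) * S l' n
        = p' * (t ^ (n + 2) / (((n : ℝ) + 2) * ((n : ℝ) + 1))
          - (l' * t) ^ (n + 2) / (((n : ℝ) + 2) * ((n : ℝ) + 1))
          - ((1 - l') * t) ^ (n + 2) / (((n : ℝ) + 2) * ((n : ℝ) + 1)))
    rw [mul_pow, mul_pow]
    simp only [S]
    ring
  -- series representation of H
  have hHsum : ∀ l' : ℝ, 0 < l' → l' < 1 →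
      HasSum (fun n : ℕ => 1 / (((n : ℝ) + 2) * ((n : ℝ) + 1)) * S l' n) (H l') := by
    intro l' h0' h1'
    have hxa : |l'| < 1 := by rw [abs_of_nonneg h0'.le]; exact h1'
    have hxb : |1 - l'| < 1 := by
      rw [abs_of_nonneg (by linarith : (0:ℝ) ≤ 1 - l')]; linarith
    have ha := hasSum_series hxa
    have hb := hasSum_series hxb
    have hcomb := (hasSum_w.sub ha).sub hb
    have hval : 1 - ((1 - l') * Real.log (1 - l') + l')
          - ((1 - (1 - l')) * Real.log (1 - (1 - l')) + (1 - l')) = H l' := by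
      rw [hH l']
      have e : (1 : ℝ) - (1 - l') = l' := by ring
      rw [e]; ring
    rw [hval] at hcomb
    refine hcomb.congr_fun fun n => ?_
    simp only [S]
    ring
  -- positivity of H
  have Hpos : ∀ l' : ℝ, 0 < l' → l' < 1 → 0 < H l' := by
    intro l' h0' h1'
    rw [hH l']
    have k1 : Real.log l' < 0 := Real.log_neg h0' h1'
    have k2 : Real.log (1 - l') < 0 := Real.log_neg (by linarith) (by linarith)
    have k3 : 0 < -l' * Real.log l' := mul_pos_of_neg_of_neg (by linarith) k1
    have k4 : (1 - l') * Real.log (1 - l') < 0 :=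
      mul_neg_of_pos_of_neg (by linarith) k2
    linarith
  have Hl_pos : 0 < H l := Hpos l hl0 hl1
  have Hh_pos : 0 < H (1 / 2) := Hpos (1 / 2) (by norm_num) (by norm_num)
  rw [div_le_div_iff₀ Hl_pos Hh_pos]
  -- suffices difference ≤ 0
  have pτ : ∀ k, 0 < S (1 / 2) k := S_pos (by norm_num) (by norm_num)
  have pσ : ∀ k, 0 < S l k := S_pos hl0 hl1
  have hsum1 : HasSum (fun n : ℕ => p' * t ^ (n + 2) * (1 / (((n : ℝ) + 2) * ((n : ℝ) + 1)))
        * (S l n * H (1 / 2) - S (1 / 2) n * H l)) (A l * H (1 / 2) - A (1 / 2) * H l) := by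
    have h1 := (hAsum l hl0.le hl1.le).mul_right (H (1 / 2))
    have h2 := (hAsum (1 / 2) (by norm_num) (by norm_num)).mul_right (H l)
    refine (h1.sub h2).congr_fun fun n => ?_
    ring
  have hsum2 : HasSum (fun n : ℕ => 1 / (((n : ℝ) + 2) * ((n : ℝ) + 1))
        * (S l n * H (1 / 2) - S (1 / 2) n * H l)) 0 := by
    have h1 := (hHsum l hl0 hl1).mul_right (H (1 / 2))
    have h2 := (hHsum (1 / 2) (by norm_num) (by norm_num)).mul_right (H l)
    have h3 := h1.sub h2
    rw [mul_comm (H l) (H (1 / 2)), sub_self] at h3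
    refine h3.congr_fun fun n => ?_
    ring
  have main : A l * H (1 / 2) - A (1 / 2) * H l ≤ 0 := by
    by_cases hc : ∃ n : ℕ, 0 < S l n * H (1 / 2) - S (1 / 2) n * H l
    · set n0 := Nat.find hc with hn0
      have hspec : 0 < S l n0 * H (1 / 2) - S (1 / 2) n0 * H l := Nat.find_spec hc
      have hlt : ∀ k < n0, S l k * H (1 / 2) - S (1 / 2) k * H l ≤ 0 := by
        intro k hk
        exact le_of_not_gt (Nat.find_min hc hk)
      have hbound : ∀ n : ℕ, p' * t ^ (n + 2) * (1 / (((n : ℝ) + 2) * ((n : ℝ) + 1)))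
            * (S l n * H (1 / 2) - S (1 / 2) n * H l)
          ≤ p' * t ^ (n0 + 2) * (1 / (((n : ℝ) + 2) * ((n : ℝ) + 1))
            * (S l n * H (1 / 2) - S (1 / 2) n * H l)) := by
        intro n
        have hw : (0 : ℝ) ≤ 1 / (((n : ℝ) + 2) * ((n : ℝ) + 1)) := by positivity
        rcases le_or_gt n0 n with h | h
        · -- inner n ≥ 0
          have hmono := mono hl0 hl1 h
          have c1 : S (1 / 2) n * (S (1 / 2) n0 * H l) ≤ S (1 / 2) n * (S l n0 * H (1 / 2)) :=
            mul_le_mul_of_nonneg_left (by linarith) (pτ n).le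
          have c2 : S l n0 * S (1 / 2) n * H (1 / 2) ≤ S l n * S (1 / 2) n0 * H (1 / 2) :=
            mul_le_mul_of_nonneg_right hmono Hh_pos.le
          have c4 : S (1 / 2) n0 * (S (1 / 2) n * H l) ≤ S (1 / 2) n0 * (S l n * H (1 / 2)) := by
            calc S (1 / 2) n0 * (S (1 / 2) n * H l)
                = S (1 / 2) n * (S (1 / 2) n0 * H l) := by ring
              _ ≤ S (1 / 2) n * (S l n0 * H (1 / 2)) := c1
              _ = S l n0 * S (1 / 2) n * H (1 / 2) := by ring
              _ ≤ S l n * S (1 / 2) n0 * H (1 / 2) := c2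
              _ = S (1 / 2) n0 * (S l n * H (1 / 2)) := by ring
          have hin : 0 ≤ S l n * H (1 / 2) - S (1 / 2) n * H l := by
            have := le_of_mul_le_mul_left c4 (pτ n0)
            linarith
          have hθ : p' * t ^ (n + 2) ≤ p' * t ^ (n0 + 2) :=
            mul_le_mul_of_nonneg_left
              (pow_le_pow_of_le_one ht0.le ht1.le (by omega)) hp'0.le
          calc p' * t ^ (n + 2) * (1 / (((n : ℝ) + 2) * ((n : ℝ) + 1)))
                * (S l n * H (1 / 2) - S (1 / 2) n * H l)
              = (p' * t ^ (n + 2)) * (1 / (((n : ℝ) + 2) * ((n : ℝ) + 1))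
                * (S l n * H (1 / 2) - S (1 / 2) n * H l)) := by ring
            _ ≤ (p' * t ^ (n0 + 2)) * (1 / (((n : ℝ) + 2) * ((n : ℝ) + 1))
                * (S l n * H (1 / 2) - S (1 / 2) n * H l)) :=
                mul_le_mul_of_nonneg_right hθ (mul_nonneg hw hin)
        · -- inner n ≤ 0
          have hin : S l n * H (1 / 2) - S (1 / 2) n * H l ≤ 0 := hlt n h
          have hθ : p' * t ^ (n0 + 2) ≤ p' * t ^ (n + 2) :=
            mul_le_mul_of_nonneg_left
              (pow_le_pow_of_le_one ht0.le ht1.le (by omega)) hp'0.le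
          have hwin : 1 / (((n : ℝ) + 2) * ((n : ℝ) + 1))
              * (S l n * H (1 / 2) - S (1 / 2) n * H l) ≤ 0 :=
            mul_nonpos_iff.2 (Or.inl ⟨hw, hin⟩)
          calc p' * t ^ (n + 2) * (1 / (((n : ℝ) + 2) * ((n : ℝ) + 1)))
                * (S l n * H (1 / 2) - S (1 / 2) n * H l)
              = (p' * t ^ (n + 2)) * (1 / (((n : ℝ) + 2) * ((n : ℝ) + 1))
                * (S l n * H (1 / 2) - S (1 / 2) n * H l)) := by ring
            _ ≤ (p' * t ^ (n0 + 2)) * (1 / (((n : ℝ) + 2) * ((n : ℝ) + 1))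
                * (S l n * H (1 / 2) - S (1 / 2) n * H l)) :=
                mul_le_mul_of_nonpos_right hθ hwin
      have := hasSum_le hbound hsum1 (hsum2.mul_left (p' * t ^ (n0 + 2)))
      simpa using this
    · push_neg at hc
      refine hasSum_le (fun n => ?_) hsum1 hasSum_zero
      have hw : (0 : ℝ) ≤ p' * t ^ (n + 2) * (1 / (((n : ℝ) + 2) * ((n : ℝ) + 1))) := by positivity
      exact mul_nonpos_iff.2 (Or.inl ⟨hw, hc n⟩)
  linarith
end

section
/- Let K be a compact convex body in ℝⁿ and define, for each unit vector v and p > 0, ρ_p(v) = (∫_K ∫_0^∞ r^{p-1} 1_K(x+rv) dr dx)^{1/p} (the radial function of the p-th radial mean body of the uniform indicator; no volume normalization). Then lim_{p→∞} ρ_p(v) = sup { r > 0 : r v ∈ K - K } = ρ_{K-K}(v), so R_∞(1_K) equals the difference body K - K. -/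
open scoped Pointwise
open MeasureTheory Filter Set


lemma aux_tendsto_one {C : ℝ} (hC : 0 < C) :
    Filter.Tendsto (fun p : ℝ => (C / p) ^ (1 / p)) Filter.atTop (nhds 1) := by
  have h0 : Filter.Tendsto (fun p : ℝ => 1 / p) Filter.atTop (nhds 0) := by
    simpa [one_div] using tendsto_inv_atTop_zero
  have h1 : Filter.Tendsto (fun p : ℝ => C ^ (1 / p)) Filter.atTop (nhds 1) := by
    have hc : ContinuousAt (fun y : ℝ => C ^ y) 0 := Real.continuousAt_const_rpow hC.ne'
    simpa [Function.comp_def] using hc.tendsto.comp h0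
  have h2 : Filter.Tendsto (fun p : ℝ => p ^ (1 / p)) Filter.atTop (nhds 1) :=
    tendsto_rpow_div
  have h3 := h1.mul (h2.inv₀ one_ne_zero)
  rw [show (1 : ℝ) * (1 : ℝ)⁻¹ = 1 by norm_num] at h3
  refine h3.congr' ?_
  filter_upwards [eventually_gt_atTop (0 : ℝ)] with p hp
  rw [div_eq_mul_inv C p, Real.mul_rpow hC.le (inv_nonneg.2 hp.le), Real.inv_rpow hp.le]


/-- For a compact convex body `K ⊆ ℝⁿ` and unit vector `v`, the radial function
`ρ_p(v) = (∫_K ∫_0^∞ r^{p-1} 1_K(x+rv) dr dx)^{1/p}` of the `p`-th radial mean body of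
`1_K` tends, as `p → ∞`, to `sup {r > 0 : r v ∈ K - K} = ρ_{K-K}(v)`; i.e.
`R_∞(1_K)` is the difference body `K - K`. -/
theorem stmt10 (n : ℕ) (K : Set (EuclideanSpace ℝ (Fin n)))
    (hKcomp : IsCompact K) (hKconv : Convex ℝ K) (hKint : (interior K).Nonempty)
    (v : EuclideanSpace ℝ (Fin n)) (hv : ‖v‖ = 1) :
    Filter.Tendsto (fun p : ℝ =>
        (∫ x in K, ∫ r in Set.Ioi (0 : ℝ),
          r ^ (p - 1) * K.indicator (fun _ => (1 : ℝ)) (x + r • v)) ^ (1 / p))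
      Filter.atTop (nhds (sSup {r : ℝ | 0 < r ∧ r • v ∈ K - K})) ∧
    sSup {r : ℝ | 0 < r ∧ r • v ∈ K - K} = sSup {r : ℝ | 0 ≤ r ∧ r • v ∈ K - K} := by
  have hKclosed : IsClosed K := hKcomp.isClosed
  obtain ⟨z, hz⟩ := hKint
  obtain ⟨δ, hδ, hball⟩ : ∃ δ > 0, Metric.ball z δ ⊆ interior K :=
    Metric.isOpen_iff.1 isOpen_interior z hz
  have hballK : Metric.ball z δ ⊆ K := hball.trans interior_subset
  have hzK : z ∈ K := interior_subset hz
  obtain ⟨M, hM⟩ : ∃ M : ℝ, ∀ y ∈ K, ‖y‖ ≤ M := by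
    obtain ⟨M, hM⟩ := hKcomp.isBounded.subset_closedBall 0
    exact ⟨M, fun y hy => by simpa using hM hy⟩
  have hnorm : ∀ r : ℝ, 0 ≤ r → ‖r • v‖ = r := by
    intro r hr
    rw [norm_smul, hv, mul_one, Real.norm_eq_abs, abs_of_nonneg hr]
  set S : Set ℝ := {r : ℝ | 0 < r ∧ r • v ∈ K - K} with hS
  have hSbdd : BddAbove S := by
    refine ⟨M + M, ?_⟩
    rintro r ⟨hr, y, hy, x, hx, hxy⟩
    have : ‖r • v‖ ≤ M + M := by
      rw [← hxy]
      exact (norm_sub_le _ _).trans (add_le_add (hM y hy) (hM x hx))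
    rwa [hnorm r hr.le] at this
  have hmemS : δ / 2 ∈ S := by
    refine ⟨half_pos hδ, z + (δ / 2) • v, ?_, z, hzK, add_sub_cancel_left z _⟩
    apply hballK
    rw [Metric.mem_ball, dist_eq_norm]
    simpa [hnorm _ (half_pos hδ).le] using half_lt_self hδ
  have hSne : S.Nonempty := ⟨_, hmemS⟩
  set R := sSup S with hR
  have hRpos : 0 < R := lt_of_lt_of_le (half_pos hδ) (le_csSup hSbdd hmemS)
  -- the function T
  set T : EuclideanSpace ℝ (Fin n) → ℝ :=
    fun x => sSup {r : ℝ | 0 ≤ r ∧ x + r • v ∈ K} with hT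
  have hSxbdd : ∀ x, BddAbove {r : ℝ | 0 ≤ r ∧ x + r • v ∈ K} := by
    intro x
    refine ⟨M + ‖x‖, ?_⟩
    rintro r ⟨hr0, hrK⟩
    have : ‖r • v‖ ≤ M + ‖x‖ := by
      have : r • v = (x + r • v) - x := by abel
      rw [this]
      exact (norm_sub_le _ _).trans (add_le_add (hM _ hrK) le_rfl)
    rwa [hnorm r hr0] at this
  have hcont : ∀ x : EuclideanSpace ℝ (Fin n),
      Continuous fun r : ℝ => x + r • v :=
    fun x => continuous_const.add (continuous_id.smul continuous_const)
  have hTmem : ∀ x ∈ K, 0 ≤ T x ∧ x + T x • v ∈ K := by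
    intro x hx
    have hcl : IsClosed {r : ℝ | 0 ≤ r ∧ x + r • v ∈ K} := by
      have : {r : ℝ | 0 ≤ r ∧ x + r • v ∈ K}
          = Ici 0 ∩ (fun r : ℝ => x + r • v) ⁻¹' K := by
        ext r; simp [Set.mem_Ici, Set.mem_preimage, Set.mem_setOf_eq]
      rw [this]
      exact isClosed_Ici.inter (hKclosed.preimage (hcont x))
    have h0 : (0 : ℝ) ∈ {r : ℝ | 0 ≤ r ∧ x + r • v ∈ K} := ⟨le_rfl, by simpa⟩
    exact hcl.csSup_mem ⟨0, h0⟩ (hSxbdd x)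
  have hTub : ∀ x, ∀ c : ℝ, 0 ≤ c → x + c • v ∈ K → c ≤ T x :=
    fun x c hc0 hcK => le_csSup (hSxbdd x) ⟨hc0, hcK⟩
  have hTseg : ∀ x ∈ K, ∀ c : ℝ, 0 ≤ c → c ≤ T x → x + c • v ∈ K := by
    intro x hx c hc0 hcT
    rcases eq_or_lt_of_le (hTmem x hx).1 with h0 | h0
    · have hc : c = 0 := le_antisymm (h0 ▸ hcT) hc0
      simpa [hc]
    · set s := c / T x with hs
      have hs0 : 0 ≤ s := div_nonneg hc0 h0.le
      have hs1 : s ≤ 1 := (div_le_one h0).2 hcT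
      have key := hKconv hx (hTmem x hx).2 (by linarith : (0:ℝ) ≤ 1 - s) hs0 (by ring)
      have hsc : s • (T x • v) = c • v := by
        rw [smul_smul, hs, div_mul_cancel₀ _ h0.ne']
      have heq : x + c • v = (1 - s) • x + s • (x + T x • v) := by
        rw [smul_add, ← hsc]; module
      rw [heq]; exact key
  have hTleR : ∀ x ∈ K, T x ≤ R := by
    intro x hx
    rcases eq_or_lt_of_le (hTmem x hx).1 with h0 | h0
    · exact h0 ▸ hRpos.le
    · refine le_csSup hSbdd ⟨h0, x + T x • v, (hTmem x hx).2, x, hx, add_sub_cancel_left x _⟩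
  -- measurable version
  set h : EuclideanSpace ℝ (Fin n) → ℝ := K.indicator T with hh
  have hh0 : ∀ x, 0 ≤ h x :=
    fun x => Set.indicator_nonneg (fun y hy => (hTmem y hy).1) x
  have hhR : ∀ x, h x ≤ R := by
    intro x
    by_cases hx : x ∈ K
    · rw [hh, Set.indicator_of_mem hx]; exact hTleR x hx
    · rw [hh, Set.indicator_of_notMem hx]; exact hRpos.le
  have hmeas : Measurable h := by
    apply measurable_of_Ici
    intro c
    rcases le_or_gt c 0 with hc | hc
    · have : h ⁻¹' Ici c = univ := by
        apply Set.eq_univ_of_forall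
        intro x
        exact le_trans hc (hh0 x)
      rw [this]; exact MeasurableSet.univ
    · have : h ⁻¹' Ici c = K ∩ (fun x => x + c • v) ⁻¹' K := by
        ext x
        simp only [Set.mem_preimage, Set.mem_Ici, Set.mem_inter_iff]
        constructor
        · intro hcx
          by_cases hxK : x ∈ K
          · rw [hh, Set.indicator_of_mem hxK] at hcx
            exact ⟨hxK, hTseg x hxK c hc.le hcx⟩
          · rw [hh, Set.indicator_of_notMem hxK] at hcx; linarith
        · rintro ⟨hxK, hK2⟩
          rw [hh, Set.indicator_of_mem hxK]
          exact hTub x c hc.le hK2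
      rw [this]
      exact hKclosed.measurableSet.inter
        ((hKclosed.preimage (continuous_id.add continuous_const)).measurableSet)
  have hKmeasSet : MeasurableSet K := hKclosed.measurableSet
  have hμKfin : volume K < ⊤ := hKcomp.measure_lt_top
  set mK := (volume K).toReal with hmK
  have hmKpos : 0 < mK := by
    refine ENNReal.toReal_pos ?_ hμKfin.ne
    exact ne_of_gt (lt_of_lt_of_le (Metric.measure_ball_pos volume z hδ) (measure_mono hballK))
  have hInner : ∀ p : ℝ, 1 ≤ p → ∀ x ∈ K,
      (∫ r in Set.Ioi (0:ℝ), r ^ (p-1) * K.indicator (fun _ => (1:ℝ)) (x + r • v))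
        = T x ^ p / p := by
    intro p hp x hx
    have hp0 : (0:ℝ) < p := lt_of_lt_of_le one_pos hp
    have hcongr : EqOn (fun r : ℝ => r ^ (p-1) * K.indicator (fun _ => (1:ℝ)) (x + r • v))
        ((Ioc (0:ℝ) (T x)).indicator fun r => r ^ (p-1)) (Ioi (0:ℝ)) := by
      intro r hr
      by_cases hrK : x + r • v ∈ K
      · have hrT : r ∈ Ioc (0:ℝ) (T x) := ⟨hr, hTub x r (le_of_lt hr) hrK⟩
        simp only [Set.indicator_of_mem hrK, Set.indicator_of_mem hrT, mul_one]
      · have hrT : r ∉ Ioc (0:ℝ) (T x) := by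
          rintro ⟨hr1, hr2⟩
          exact hrK (hTseg x hx r hr1.le hr2)
        simp only [Set.indicator_of_notMem hrK, Set.indicator_of_notMem hrT, mul_zero]
    rw [setIntegral_congr_fun measurableSet_Ioi hcongr,
      setIntegral_indicator measurableSet_Ioc,
      Set.inter_eq_self_of_subset_right Ioc_subset_Ioi_self,
      ← intervalIntegral.integral_of_le (hTmem x hx).1,
      integral_rpow (Or.inl (by linarith : (-1:ℝ) < p - 1))]
    rw [show p - 1 + 1 = p by ring, Real.zero_rpow hp0.ne']
    ring
  have hFeq : ∀ p : ℝ, 1 ≤ p →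
      (∫ x in K, ∫ r in Set.Ioi (0:ℝ), r ^ (p-1) * K.indicator (fun _ => (1:ℝ)) (x + r • v))
        = ∫ x in K, h x ^ p / p := by
    intro p hp
    refine setIntegral_congr_fun hKmeasSet fun x hx => ?_
    rw [hInner p hp x hx, hh]
    rw [Set.indicator_of_mem hx]
  have hintg : ∀ p : ℝ, 0 < p → IntegrableOn (fun x => h x ^ p / p) K volume := by
    intro p hp0
    refine Integrable.mono' (g := fun _ => R ^ p / p)
      (integrableOn_const (C := R ^ p / p) hμKfin.ne) ?_ (ae_of_all _ fun x => ?_)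
    · exact (((Real.continuous_rpow_const hp0.le).measurable.comp hmeas).div_const
        p).aestronglyMeasurable
    · rw [Real.norm_eq_abs,
        abs_of_nonneg (div_nonneg (Real.rpow_nonneg (hh0 x) p) hp0.le)]
      exact div_le_div_of_nonneg_right (Real.rpow_le_rpow (hh0 x) (hhR x) hp0.le) hp0.le
  have hFnonneg : ∀ p : ℝ, 0 < p → 0 ≤ ∫ x in K, h x ^ p / p :=
    fun p hp0 => setIntegral_nonneg hKmeasSet fun x _ =>
      div_nonneg (Real.rpow_nonneg (hh0 x) p) hp0.le
  have hupper : ∀ p : ℝ, 0 < p → (∫ x in K, h x ^ p / p) ≤ R ^ p / p * mK := by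
    intro p hp0
    have hmono := setIntegral_mono_on (hintg p hp0)
      (integrableOn_const (C := R ^ p / p) hμKfin.ne) hKmeasSet
      (fun x _ =>
        div_le_div_of_nonneg_right (Real.rpow_le_rpow (hh0 x) (hhR x) hp0.le) hp0.le)
    rwa [setIntegral_const, smul_eq_mul, mul_comm] at hmono
  have hmain : Filter.Tendsto (fun p : ℝ =>
      (∫ x in K, ∫ r in Set.Ioi (0:ℝ),
        r ^ (p-1) * K.indicator (fun _ => (1:ℝ)) (x + r • v)) ^ (1/p))
      Filter.atTop (nhds R) := by
    rw [tendsto_order]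
    constructor
    · intro a ha
      rcases lt_or_ge a 0 with ha0 | ha0
      · filter_upwards [eventually_ge_atTop (1:ℝ)] with p hp
        have hp0 : (0:ℝ) < p := lt_of_lt_of_le one_pos hp
        refine lt_of_lt_of_le ha0 ?_
        rw [hFeq p hp]
        exact Real.rpow_nonneg (hFnonneg p hp0) _
      · obtain ⟨r, hrS, har⟩ := exists_lt_of_lt_csSup hSne ha
        obtain ⟨y0, hy0, x0, hx0, hxy⟩ := hrS.2
        have hr0 : 0 < r := hrS.1
        set lam : ℝ := (r - a) / (2 * r) with hlam
        have hlam0 : 0 < lam := div_pos (by linarith) (by linarith)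
        have hlam1 : lam < 1 := by
          rw [hlam, div_lt_one (by linarith)]; linarith
        set a' : ℝ := (1 - lam) * r with ha'
        have ha'eq : a' = (r + a) / 2 := by
          rw [ha', hlam]; field_simp; ring
        have haa' : a < a' := by rw [ha'eq]; linarith
        have ha'0 : 0 < a' := lt_of_le_of_lt ha0 haa'
        set c := (1 - lam) • x0 + lam • z with hc
        set A := Metric.ball c (lam * δ) with hA
        have hAK : ∀ w ∈ A, w ∈ K ∧ w + a' • v ∈ K := by
          intro w hw
          set b := z + lam⁻¹ • (w - c) with hb
          have hbball : b ∈ Metric.ball z δ := by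
            rw [Metric.mem_ball, dist_eq_norm, hb]
            have h1 : z + lam⁻¹ • (w - c) - z = lam⁻¹ • (w - c) := add_sub_cancel_left z _
            rw [h1, norm_smul, Real.norm_eq_abs, abs_of_pos (inv_pos.2 hlam0)]
            have h2 : ‖w - c‖ < lam * δ := by
              rw [← dist_eq_norm]; exact hw
            calc lam⁻¹ * ‖w - c‖ < lam⁻¹ * (lam * δ) :=
                  mul_lt_mul_of_pos_left h2 (inv_pos.2 hlam0)
              _ = δ := by field_simp
          have hbK : b ∈ K := hballK hbball
          have hwrep : w = (1 - lam) • x0 + lam • b := by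
            rw [hb, hc]
            have hli : lam * lam⁻¹ = 1 := mul_inv_cancel₀ hlam0.ne'
            match_scalars <;> field_simp <;> ring
          have hy0' : y0 = x0 + r • v := by
            rw [← sub_eq_iff_eq_add']
            exact hxy
          have hyrep : w + a' • v = (1 - lam) • y0 + lam • b := by
            rw [hwrep, hy0', ha']
            module
          constructor
          · rw [hwrep]
            exact hKconv hx0 hbK (by linarith) hlam0.le (by ring)
          · rw [hyrep]
            exact hKconv hy0 hbK (by linarith) hlam0.le (by ring)
        have hAsubK : A ⊆ K := fun w hw => (hAK w hw).1
        set mA := (volume A).toReal with hmA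
        have hmApos : 0 < mA := ENNReal.toReal_pos
          (Metric.measure_ball_pos volume c (by positivity)).ne' measure_ball_lt_top.ne
        have hlow : ∀ p : ℝ, 1 ≤ p → a' ^ p / p * mA ≤ ∫ x in K, h x ^ p / p := by
          intro p hp
          have hp0 : (0:ℝ) < p := lt_of_lt_of_le one_pos hp
          have hstep1 : (∫ _ in A, a' ^ p / p) ≤ ∫ x in A, h x ^ p / p := by
            refine setIntegral_mono_on (integrableOn_const (C := a' ^ p / p) measure_ball_lt_top.ne)
              ((hintg p hp0).mono_set hAsubK) measurableSet_ball fun w hw => ?_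
            have hle : a' ≤ h w := by
              rw [hh, Set.indicator_of_mem (hAK w hw).1]
              exact hTub w a' ha'0.le (hAK w hw).2
            exact div_le_div_of_nonneg_right (Real.rpow_le_rpow ha'0.le hle hp0.le) hp0.le
          have hstep2 : (∫ x in A, h x ^ p / p) ≤ ∫ x in K, h x ^ p / p :=
            setIntegral_mono_set (hintg p hp0)
              (ae_of_all _ fun x => div_nonneg (Real.rpow_nonneg (hh0 x) p) hp0.le)
              (HasSubset.Subset.eventuallyLE hAsubK)
          calc a' ^ p / p * mA = ∫ _ in A, a' ^ p / p := by
                rw [setIntegral_const, smul_eq_mul, mul_comm]; rfl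
            _ ≤ _ := hstep1.trans hstep2
        have htend : Filter.Tendsto (fun p : ℝ => a' * (mA / p) ^ (1/p))
            Filter.atTop (nhds a') := by
          simpa using tendsto_const_nhds.mul (aux_tendsto_one hmApos)
        filter_upwards [htend.eventually (eventually_gt_nhds haa'),
          eventually_ge_atTop (1:ℝ)] with p hpgt hp1
        have hp0 : (0:ℝ) < p := lt_of_lt_of_le one_pos hp1
        refine lt_of_lt_of_le hpgt ?_
        rw [hFeq p hp1]
        have hpow : (a' ^ p) ^ (1/p) = a' := by
          rw [← Real.rpow_mul ha'0.le, mul_one_div_cancel hp0.ne', Real.rpow_one]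
        have h1 : (a' ^ p / p * mA) ^ (1/p) = a' * (mA / p) ^ (1/p) := by
          rw [show a' ^ p / p * mA = a' ^ p * (mA / p) by ring,
            Real.mul_rpow (Real.rpow_nonneg ha'0.le p) (div_nonneg hmApos.le hp0.le), hpow]
        rw [← h1]
        exact Real.rpow_le_rpow
          (mul_nonneg (div_nonneg (Real.rpow_nonneg ha'0.le p) hp0.le) hmApos.le)
          (hlow p hp1) (by positivity)
    · intro b hb
      have htend : Filter.Tendsto (fun p : ℝ => R * (mK / p) ^ (1/p))
          Filter.atTop (nhds R) := by
        simpa using tendsto_const_nhds.mul (aux_tendsto_one hmKpos)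
      filter_upwards [htend.eventually (eventually_lt_nhds hb),
        eventually_ge_atTop (1:ℝ)] with p hplt hp1
      have hp0 : (0:ℝ) < p := lt_of_lt_of_le one_pos hp1
      refine lt_of_le_of_lt ?_ hplt
      rw [hFeq p hp1]
      have hpow : (R ^ p) ^ (1/p) = R := by
        rw [← Real.rpow_mul hRpos.le, mul_one_div_cancel hp0.ne', Real.rpow_one]
      have h1 : (R ^ p / p * mK) ^ (1/p) = R * (mK / p) ^ (1/p) := by
        rw [show R ^ p / p * mK = R ^ p * (mK / p) by ring,
          Real.mul_rpow (Real.rpow_nonneg hRpos.le p) (div_nonneg hmKpos.le hp0.le), hpow]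
      rw [← h1]
      exact Real.rpow_le_rpow (hFnonneg p hp0) (hupper p hp0) (by positivity)
  refine ⟨hmain, ?_⟩
  have hset : {r : ℝ | 0 ≤ r ∧ r • v ∈ K - K} = insert 0 S := by
    ext r
    simp only [Set.mem_setOf_eq, Set.mem_insert_iff, hS]
    constructor
    · rintro ⟨hr0, hrK⟩
      rcases eq_or_lt_of_le hr0 with hr | hr
      · exact Or.inl hr.symm
      · exact Or.inr ⟨hr, hrK⟩
    · rintro (rfl | ⟨hr, hrK⟩)
      · refine ⟨le_rfl, ?_⟩
        rw [zero_smul]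
        simpa using Set.sub_mem_sub hzK hzK
      · exact ⟨hr.le, hrK⟩
  rw [hset, csSup_insert hSbdd hSne]
  exact (sup_eq_right.2 hRpos.le).symm
end

section
/- Let f be a continuous probability density on ℝⁿ with compact support not containing issues at the hyperplane (i.e., such that all integrals below converge). Then for every unit vector v, lim_{p→-1⁺} ((p+1)/2) ∫_{ℝⁿ} |⟨v,x⟩|^p f(x) dx = ∫_{v^⊥} f(x) dx. -/
open MeasureTheory Filter Set Real

private lemma integrableOn_abs_rpow {p : ℝ} (hp : -1 < p) (R : ℝ) :
    IntegrableOn (fun t : ℝ => |t| ^ p) (Icc (-R) R) := by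
  have key : ∀ S : ℝ, 0 < S → IntegrableOn (fun t : ℝ => |t| ^ p) (Icc (-S) S) := by
    intro S hS
    have h1 : IntegrableOn (fun t : ℝ => t ^ p) (Ioc 0 S) := by
      have := intervalIntegral.intervalIntegrable_rpow' (a := 0) (b := S) hp
      rwa [intervalIntegrable_iff_integrableOn_Ioc_of_le hS.le] at this
    have h2 : IntegrableOn (fun t : ℝ => |t| ^ p) (Ioc 0 S) :=
      h1.congr_fun (fun t ht => by rw [abs_of_pos ht.1]) measurableSet_Ioc
    have h3 : Integrable ((Ioc (0:ℝ) S).indicator (fun t => |t| ^ p)) := by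
      rwa [integrable_indicator_iff measurableSet_Ioc]
    have h4 := h3.comp_neg
    have h5 : (fun t : ℝ => ((Ioc (0:ℝ) S).indicator (fun t => |t| ^ p)) (-t))
        = (Ico (-S) (0:ℝ)).indicator (fun t => |t| ^ p) := by
      funext t
      by_cases ht : t ∈ Ico (-S) (0:ℝ)
      · have h6 : -t ∈ Ioc (0:ℝ) S := ⟨by linarith [ht.2], by linarith [ht.1]⟩
        rw [indicator_of_mem ht, indicator_of_mem h6, abs_neg]
      · have h6 : -t ∉ Ioc (0:ℝ) S := by
          intro h; exact ht ⟨by linarith [h.2], by linarith [h.1]⟩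
        rw [indicator_of_notMem ht, indicator_of_notMem h6]
    have h6 : IntegrableOn (fun t : ℝ => |t| ^ p) (Ico (-S) 0) := by
      rw [← integrable_indicator_iff measurableSet_Ico, ← h5]
      exact h4
    have h7 : IntegrableOn (fun t : ℝ => |t| ^ p) {(0:ℝ)} := by
      have : (volume : Measure ℝ).restrict {(0:ℝ)} = 0 :=
        Measure.restrict_eq_zero.mpr (measure_singleton 0)
      rw [IntegrableOn, this]
      exact integrable_zero_measure
    have := (h6.union h2).union h7
    refine this.mono_set fun t ht => ?_
    rcases lt_trichotomy t 0 with h | h | h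
    · exact Or.inl (Or.inl ⟨ht.1, h⟩)
    · exact Or.inr (by simp [h])
    · exact Or.inl (Or.inr ⟨h, ht.2⟩)
  refine (key (|R| + 1) (by positivity)).mono_set fun t ht => ?_
  simp only [mem_Icc] at ht ⊢
  constructor <;> linarith [le_abs_self R, neg_abs_le R]

private lemma exists_bound_radius {φ : ℝ → ℝ} (hc : Continuous φ) (hs : HasCompactSupport φ) :
    ∃ C R : ℝ, 0 ≤ C ∧ 1 ≤ R ∧ (∀ t, |φ t| ≤ C) ∧ (∀ t, R ≤ |t| → φ t = 0) := by
  obtain ⟨C, hC⟩ := hs.exists_bound_of_continuous hc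
  obtain ⟨r, hr⟩ := hs.isBounded.subset_closedBall 0
  refine ⟨C, max r 0 + 1, le_trans (norm_nonneg (φ 0)) (hC 0), by simp, fun t => by
    simpa using hC t, fun t ht => ?_⟩
  apply image_eq_zero_of_notMem_tsupport
  intro hmem
  have := hr hmem
  simp only [Metric.mem_closedBall, Real.dist_eq, sub_zero] at this
  have h1 : max r 0 + 1 ≤ |t| := ht
  have := le_max_left r 0
  linarith

private lemma integrable_abs_rpow_mul {φ : ℝ → ℝ} (hc : Continuous φ) (hs : HasCompactSupport φ)
    {p : ℝ} (hp : -1 < p) : Integrable (fun t => |t| ^ p * φ t) := by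
  obtain ⟨C, R, hC0, hR1, hC, hR⟩ := exists_bound_radius hc hs
  have hbd : Integrable (fun t : ℝ => C * (Icc (-R) R).indicator (fun t => |t| ^ p) t) :=
    ((integrable_indicator_iff measurableSet_Icc).mpr (integrableOn_abs_rpow hp R)).const_mul C
  refine hbd.mono' ?_ ?_
  · have hm : Measurable fun t : ℝ => |t| ^ p := by measurability
    exact (hm.mul hc.measurable).aestronglyMeasurable
  · refine .of_forall fun t => ?_
    rw [Real.norm_eq_abs, abs_mul, abs_of_nonneg (Real.rpow_nonneg (abs_nonneg t) p)]
    by_cases ht : t ∈ Icc (-R) R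
    · rw [indicator_of_mem ht]
      calc |t| ^ p * |φ t| ≤ |t| ^ p * C :=
            mul_le_mul_of_nonneg_left (hC t) (Real.rpow_nonneg (abs_nonneg t) p)
        _ = C * |t| ^ p := mul_comm _ _
    · have : φ t = 0 := by
        apply hR
        simp only [mem_Icc, not_and_or, not_le] at ht
        rcases ht with h | h
        · rw [abs_of_neg (by linarith : t < 0)]; linarith
        · rw [abs_of_pos (by linarith : 0 < t)]; linarith
      rw [this, abs_zero, mul_zero, indicator_of_notMem ht, mul_zero]

private lemma tendsto_oneDim {g : ℝ → ℝ} (hgc : Continuous g) (hgs : HasCompactSupport g) :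
    Filter.Tendsto (fun p : ℝ => (p + 1) / 2 * ∫ t, |t| ^ p * g t)
      (nhdsWithin (-1) (Set.Ioi (-1))) (nhds (g 0)) := by
  set h : ℝ → ℝ := fun t => g t + g (-t) with hh_def
  have hgc' : Continuous fun t : ℝ => g (-t) := hgc.comp continuous_neg
  have hgs' : HasCompactSupport fun t : ℝ => g (-t) :=
    hgs.comp_homeomorph (Homeomorph.neg ℝ)
  have hhc : Continuous h := hgc.add hgc'
  have hhs : HasCompactSupport h := hgs.add hgs'
  obtain ⟨C, R, hC0, hR1, hC, hRsupp⟩ := exists_bound_radius hhc hhs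
  -- Step 1 : splitting the integral
  have E1 : ∀ p : ℝ, -1 < p → (∫ t, |t| ^ p * g t) = ∫ t in Ioi (0:ℝ), t ^ p * h t := by
    intro p hp
    have I1 := integrable_abs_rpow_mul hgc hgs hp
    have I2 := integrable_abs_rpow_mul hgc' hgs' hp
    have e0 : (∫ t, |t| ^ p * g t)
        = (∫ t in Iic (0:ℝ), |t| ^ p * g t) + ∫ t in Ioi (0:ℝ), |t| ^ p * g t :=
      (intervalIntegral.integral_Iic_add_Ioi I1.integrableOn I1.integrableOn).symm
    have e1 : (∫ t in Iic (0:ℝ), |t| ^ p * g t) = ∫ x in Ioi (0:ℝ), |(-x)| ^ p * g (-x) := by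
      symm
      simpa using integral_comp_neg_Ioi 0 fun t => |t| ^ p * g t
    have e2 : (∫ x in Ioi (0:ℝ), |(-x)| ^ p * g (-x)) = ∫ x in Ioi (0:ℝ), x ^ p * g (-x) :=
      setIntegral_congr_fun measurableSet_Ioi fun x hx => by
        rw [abs_neg, abs_of_pos (mem_Ioi.mp hx)]
    have e3 : (∫ x in Ioi (0:ℝ), |x| ^ p * g x) = ∫ x in Ioi (0:ℝ), x ^ p * g x :=
      setIntegral_congr_fun measurableSet_Ioi fun x hx => by
        rw [abs_of_pos (mem_Ioi.mp hx)]
    have I1' : IntegrableOn (fun x : ℝ => x ^ p * g x) (Ioi 0) :=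
      I1.integrableOn.congr_fun (fun x hx => by dsimp only; rw [abs_of_pos (mem_Ioi.mp hx)])
        measurableSet_Ioi
    have I2' : IntegrableOn (fun x : ℝ => x ^ p * g (-x)) (Ioi 0) :=
      I2.integrableOn.congr_fun (fun x hx => by dsimp only; rw [abs_of_pos (mem_Ioi.mp hx)])
        measurableSet_Ioi
    rw [e0, e1, e2, e3, ← integral_add I2' I1']
    refine setIntegral_congr_fun measurableSet_Ioi fun x _ => ?_
    simp only [hh_def]; ring
  -- Step 2 : substitution u = t ^ (p+1)
  have E2 : ∀ p : ℝ, -1 < p → p < 0 →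
      (p + 1) * (∫ t in Ioi (0:ℝ), t ^ p * h t)
        = ∫ u in Ioi (0:ℝ), h (u ^ (p + 1)⁻¹) := by
    intro p hp hp0
    have hpos : 0 < p + 1 := by linarith
    have hne : p + 1 ≠ 0 := hpos.ne'
    have key := integral_comp_rpow_Ioi (fun u => h (u ^ (p + 1)⁻¹)) hne
    have congr1 : (∫ x in Ioi (0:ℝ),
        (|p + 1| * x ^ (p + 1 - 1)) • (fun u => h (u ^ (p + 1)⁻¹)) (x ^ (p + 1)))
        = ∫ x in Ioi (0:ℝ), (p + 1) * (x ^ p * h x) := by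
      refine setIntegral_congr_fun measurableSet_Ioi fun x hx => ?_
      have hx0 : 0 < x := mem_Ioi.mp hx
      have hxx : (x ^ (p + 1)) ^ (p + 1)⁻¹ = x := by
        rw [← Real.rpow_mul hx0.le, mul_inv_cancel₀ hne, Real.rpow_one]
      simp only [hxx, smul_eq_mul, abs_of_pos hpos, add_sub_cancel_right]
      ring
    rw [← key, congr1, integral_const_mul]
  -- Step 3 : the limit
  have hq : Filter.Tendsto (fun p : ℝ => (p + 1)⁻¹)
      (nhdsWithin (-1) (Set.Ioi (-1))) Filter.atTop := by
    have h1 : Filter.Tendsto (fun p : ℝ => p + 1) (nhdsWithin (-1) (Set.Ioi (-1)))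
        (nhdsWithin 0 (Set.Ioi 0)) := by
      apply tendsto_nhdsWithin_of_tendsto_nhds_of_eventually_within
      · have : Filter.Tendsto (fun p : ℝ => p + 1) (nhds (-1)) (nhds ((-1) + 1)) :=
          (continuous_id.add continuous_const).tendsto (-1)
        rw [neg_add_cancel] at this
        exact this.mono_left nhdsWithin_le_nhds
      · filter_upwards [self_mem_nhdsWithin] with p hp
        have : (-1:ℝ) < p := hp
        exact mem_Ioi.mpr (by linarith)
    exact tendsto_inv_nhdsGT_zero.comp h1
  have hev_lt0 : ∀ᶠ p : ℝ in nhdsWithin (-1) (Set.Ioi (-1)), p < 0 :=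
    eventually_nhdsWithin_of_eventually_nhds
      (Filter.Tendsto.eventually_lt_const (by norm_num) Filter.tendsto_id)
  have hev_mem : ∀ᶠ p : ℝ in nhdsWithin (-1) (Set.Ioi (-1)), -1 < p :=
    eventually_mem_nhdsWithin
  have key3 : Filter.Tendsto (fun p : ℝ => ∫ u in Ioi (0:ℝ), h (u ^ (p + 1)⁻¹))
      (nhdsWithin (-1) (Set.Ioi (-1)))
      (nhds (∫ u in Ioi (0:ℝ), (Ioo (0:ℝ) 1).indicator (fun _ => h 0) u)) := by
    refine tendsto_integral_filter_of_dominated_convergence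
      ((Icc (0:ℝ) R).indicator fun _ => C) ?_ ?_ ?_ ?_
    · refine .of_forall fun p => ?_
      have hm : Measurable fun u : ℝ => u ^ (p + 1)⁻¹ := by measurability
      exact (hhc.measurable.comp hm).aestronglyMeasurable
    · filter_upwards [hev_mem, hev_lt0] with p hp hp0
      rw [ae_restrict_iff' measurableSet_Ioi]
      refine .of_forall fun u hu => ?_
      have hu0 : 0 < u := mem_Ioi.mp hu
      have hpos : 0 < p + 1 := by linarith
      have hq1 : 1 ≤ (p + 1)⁻¹ := by
        rw [le_inv_comm₀ one_pos hpos]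
        simpa using by linarith
      by_cases hu' : u ≤ R
      · rw [indicator_of_mem (mem_Icc.mpr ⟨hu0.le, hu'⟩), Real.norm_eq_abs]
        exact hC _
      · push_neg at hu'
        have h1u : 1 < u := lt_of_le_of_lt hR1 hu'
        have : u ≤ u ^ (p + 1)⁻¹ := by
          nth_rewrite 1 [← Real.rpow_one u]
          exact Real.rpow_le_rpow_of_exponent_le h1u.le hq1
        have hz : h (u ^ (p + 1)⁻¹) = 0 := by
          apply hRsupp
          rw [abs_of_nonneg (Real.rpow_nonneg hu0.le _)]
          linarith
        rw [hz, indicator_of_notMem (by simp [not_and_or]; intro; linarith)]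
        simp
    · exact (((integrable_indicator_iff measurableSet_Icc).mpr
        ((integrableOn_const_iff).mpr (Or.inr measure_Icc_lt_top))).restrict (s := Ioi 0))
    · have hne1 : ∀ᵐ u : ℝ ∂volume.restrict (Ioi 0), u ≠ 1 := by
        refine ae_restrict_of_ae ?_
        rw [ae_iff]
        simp only [not_not, setOf_eq_eq_singleton]
        exact measure_singleton 1
      filter_upwards [hne1, ae_restrict_mem measurableSet_Ioi] with u hu1 hu
      have hu0 : 0 < u := mem_Ioi.mp hu
      rcases lt_or_gt_of_ne hu1 with hlt | hgt
      · have h2 : Filter.Tendsto (fun p : ℝ => u ^ (p + 1)⁻¹)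
            (nhdsWithin (-1) (Set.Ioi (-1))) (nhds 0) :=
          (tendsto_rpow_atTop_of_base_lt_one u (by linarith) hlt).comp hq
        have h3 := (hhc.tendsto 0).comp h2
        rw [indicator_of_mem (mem_Ioo.mpr ⟨hu0, hlt⟩)]
        exact h3
      · have h2 : Filter.Tendsto (fun p : ℝ => u ^ (p + 1)⁻¹)
            (nhdsWithin (-1) (Set.Ioi (-1))) Filter.atTop := by
          have hbase : Filter.Tendsto (fun q : ℝ => u ^ q) Filter.atTop Filter.atTop := by
            have hlog : 0 < Real.log u := Real.log_pos hgt
            have := Real.tendsto_exp_atTop.comp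
              (Filter.Tendsto.const_mul_atTop hlog Filter.tendsto_id)
            refine this.congr fun q => ?_
            rw [Function.comp_apply, Real.rpow_def_of_pos hu0]
            rfl
          exact hbase.comp hq
        have h3 : ∀ᶠ p : ℝ in nhdsWithin (-1) (Set.Ioi (-1)), h (u ^ (p + 1)⁻¹) = 0 := by
          filter_upwards [h2.eventually_ge_atTop R] with p hp
          exact hRsupp _ (by rwa [abs_of_nonneg (Real.rpow_nonneg hu0.le _)])
        rw [indicator_of_notMem (by simp [not_and_or]; intro; linarith)]
        exact Filter.Tendsto.congr' (h3.mono fun p hp => hp.symm) tendsto_const_nhds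
  have hval : (∫ u in Ioi (0:ℝ), (Ioo (0:ℝ) 1).indicator (fun _ => h 0) u) = h 0 := by
    rw [integral_indicator measurableSet_Ioo, Measure.restrict_restrict measurableSet_Ioo,
      inter_eq_left.mpr (Ioo_subset_Ioi_self), integral_const]
    simp [Real.volume_Ioo]
  rw [hval] at key3
  have final := key3.const_mul (1/2 : ℝ)
  have hh0 : (1/2 : ℝ) * h 0 = g 0 := by simp [hh_def]; ring
  rw [hh0] at final
  refine final.congr' ?_
  filter_upwards [hev_mem, hev_lt0] with p hp hp0
  rw [← E2 p hp hp0, ← E1 p hp]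
  ring

set_option maxHeartbeats 2000000 in
/-- For a continuous compactly supported probability density `f` on `ℝⁿ` and a unit
vector `v`: `lim_{p→-1⁺} ((p+1)/2) ∫ |⟨v,x⟩|^p f(x) dx = ∫_{v^⊥} f`, i.e. the limiting
dilated polar centroid body `Z_{-1}(f)` is the intersection body `I(f)`. -/
theorem stmt12 (n : ℕ) (f : EuclideanSpace ℝ (Fin n) → ℝ)
    (hfc : Continuous f) (hfs : HasCompactSupport f)
    (hf0 : ∀ x, 0 ≤ f x) (hf1 : ∫ x, f x = 1)
    (v : EuclideanSpace ℝ (Fin n)) (hv : ‖v‖ = 1) :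
    Filter.Tendsto (fun p : ℝ => (p + 1) / 2 * ∫ x, |(inner ℝ v x : ℝ)| ^ p * f x)
      (nhdsWithin (-1) (Set.Ioi (-1)))
      (nhds (∫ y : (ℝ ∙ v)ᗮ, f y)) := by
  set K := (ℝ ∙ v)ᗮ with hKdef
  have hvv : (inner ℝ v v : ℝ) = 1 := by
    rw [real_inner_self_eq_norm_sq, hv]; norm_num
  have horth : ∀ y : K, (inner ℝ v (y : EuclideanSpace ℝ (Fin n)) : ℝ) = 0 := fun y =>
    Submodule.mem_orthogonal_singleton_iff_inner_right.mp y.2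
  have hinner : ∀ (t : ℝ) (y : K),
      (inner ℝ v (t • v + (y : EuclideanSpace ℝ (Fin n))) : ℝ) = t := by
    intro t y
    rw [inner_add_right, real_inner_smul_right, hvv, horth]; ring
  -- the linear equivalence between ℝ × K and ℝⁿ
  let L : (ℝ × K) →ₗ[ℝ] EuclideanSpace ℝ (Fin n) :=
    LinearMap.coprod (LinearMap.toSpanSingleton ℝ _ v) (Submodule.subtype K)
  have hL : ∀ z : ℝ × K, L z = z.1 • v + (z.2 : EuclideanSpace ℝ (Fin n)) := fun z => rfl
  have hinj : Function.Injective L := by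
    intro a b hab
    have h1 : (inner ℝ v (L a) : ℝ) = inner ℝ v (L b) := by rw [hab]
    rw [hL, hL, hinner, hinner] at h1
    have h2 := hab
    rw [hL, hL, h1] at h2
    exact Prod.ext h1 (Subtype.ext (add_left_cancel h2))
  have hsurj : Function.Surjective L := by
    intro x
    refine ⟨((inner ℝ v x : ℝ), ⟨x - (inner ℝ v x : ℝ) • v, ?_⟩), ?_⟩
    · rw [Submodule.mem_orthogonal_singleton_iff_inner_right, inner_sub_right,
        real_inner_smul_right, hvv]
      ring
    · rw [hL]; simp
  let e : (ℝ × K) ≃L[ℝ] EuclideanSpace ℝ (Fin n) :=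
    (LinearEquiv.ofBijective L ⟨hinj, hsurj⟩).toContinuousLinearEquiv
  have he : ∀ z : ℝ × K, e z = z.1 • v + (z.2 : EuclideanSpace ℝ (Fin n)) := fun z => rfl
  have hnorm : ∀ z : ℝ × K, ‖e z‖ ^ 2 = ‖z.1‖ ^ 2 + ‖z.2‖ ^ 2 := by
    intro z
    have hco : ‖(z.2 : EuclideanSpace ℝ (Fin n))‖ = ‖z.2‖ := rfl
    rw [he, norm_add_sq_real, real_inner_smul_left, horth z.2, norm_smul, hv, hco]
    simp [Real.norm_eq_abs, sq_abs]
  -- measure preservation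
  haveI hprodHaar : (volume : Measure (ℝ × K)).IsAddHaarMeasure :=
    (Measure.volume_eq_prod ℝ K) ▸ Measure.prod.instIsAddHaarMeasure volume volume
  haveI hmapHaar : (Measure.map (⇑e) (volume : Measure (ℝ × K))).IsAddHaarMeasure :=
    e.isAddHaarMeasure_map volume
  have hmp : MeasurePreserving (⇑e) (volume : Measure (ℝ × K)) volume := by
    refine ⟨e.continuous.measurable, ?_⟩
    have huniq := Measure.isAddLeftInvariant_eq_smul
      (Measure.map (⇑e) (volume : Measure (ℝ × K)))
      (volume : Measure (EuclideanSpace ℝ (Fin n)))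
    set c := Measure.addHaarScalarFactor (Measure.map (⇑e) (volume : Measure (ℝ × K)))
      (volume : Measure (EuclideanSpace ℝ (Fin n))) with hcdef
    have hInt : (∫ x, Real.exp (-Real.pi * ‖x‖ ^ 2)
        ∂(Measure.map (⇑e) (volume : Measure (ℝ × K)))) = 1 := by
      have hcont : Continuous fun x : EuclideanSpace ℝ (Fin n) =>
          Real.exp (-Real.pi * ‖x‖ ^ 2) :=
        Real.continuous_exp.comp (continuous_const.mul (continuous_norm.pow 2))
      rw [integral_map e.continuous.measurable.aemeasurable hcont.aestronglyMeasurable]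
      have hfun : (fun z : ℝ × K => Real.exp (-Real.pi * ‖e z‖ ^ 2))
          = fun z : ℝ × K =>
            Real.exp (-Real.pi * ‖z.1‖ ^ 2) * Real.exp (-Real.pi * ‖z.2‖ ^ 2) := by
        funext z
        rw [← Real.exp_add, hnorm]
        ring_nf
      rw [hfun, Measure.volume_eq_prod]
      rw [MeasureTheory.integral_prod_mul (μ := (volume : Measure ℝ))
        (ν := (volume : Measure K)) (f := fun a : ℝ => Real.exp (-Real.pi * ‖a‖ ^ 2))
        (g := fun y : K => Real.exp (-Real.pi * ‖y‖ ^ 2)),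
        GaussianFourier.integral_rexp_neg_mul_sq_norm Real.pi_pos,
        GaussianFourier.integral_rexp_neg_mul_sq_norm Real.pi_pos]
      simp [div_self Real.pi_ne_zero]
    rw [huniq, integral_smul_nnreal_measure,
      GaussianFourier.integral_rexp_neg_mul_sq_norm Real.pi_pos] at hInt
    simp only [div_self Real.pi_ne_zero, Real.one_rpow, NNReal.smul_def, smul_eq_mul,
      mul_one] at hInt
    have hc1 : c = 1 := by exact_mod_cast hInt
    rw [huniq, hc1, one_smul]
  have hemb : MeasurableEmbedding (⇑e) := e.toHomeomorph.measurableEmbedding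
  -- bounds for f
  obtain ⟨Cf, hCf⟩ := hfs.exists_bound_of_continuous hfc
  have hCf0 : 0 ≤ Cf := le_trans (norm_nonneg _) (hCf 0)
  obtain ⟨r0, hr0⟩ := hfs.isBounded.subset_closedBall 0
  set Rf : ℝ := max r0 0 + 1 with hRfdef
  have hRfpos : 0 < Rf := by positivity
  have hfzero : ∀ x, Rf ≤ ‖x‖ → f x = 0 := by
    intro x hx
    apply image_eq_zero_of_notMem_tsupport
    intro hmem
    have h1 := hr0 hmem
    rw [Metric.mem_closedBall, dist_zero_right] at h1
    have h2 := le_max_left r0 0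
    linarith
  haveI : ProperSpace K := FiniteDimensional.proper ℝ K
  -- the marginal function g
  set g : ℝ → ℝ := fun t => ∫ y : K, f (t • v + (y : EuclideanSpace ℝ (Fin n))) with hgdef
  have hgc : Continuous g := by
    rw [continuous_iff_continuousAt]
    intro t₀
    apply tendsto_integral_filter_of_dominated_convergence
      ((Metric.closedBall (0 : K) (Rf + |t₀| + 1)).indicator fun _ => Cf)
    · refine .of_forall fun t => (hfc.comp ?_).aestronglyMeasurable
      exact continuous_const.add continuous_subtype_val
    · filter_upwards [Metric.closedBall_mem_nhds t₀ one_pos] with t ht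
      refine .of_forall fun y => ?_
      have hdist : |t - t₀| ≤ 1 := by
        simpa [Real.dist_eq] using Metric.mem_closedBall.mp ht
      by_cases hy : ‖(y : EuclideanSpace ℝ (Fin n))‖ ≤ Rf + |t₀| + 1
      · have hymem : y ∈ Metric.closedBall (0 : K) (Rf + |t₀| + 1) :=
          mem_closedBall_zero_iff.mpr hy
        rw [indicator_of_mem hymem]
        exact hCf _
      · push_neg at hy
        have hz : f (t • v + (y : EuclideanSpace ℝ (Fin n))) = 0 := by
          apply hfzero
          have h1 : ‖(y : EuclideanSpace ℝ (Fin n))‖ - ‖t • v‖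
              ≤ ‖t • v + (y : EuclideanSpace ℝ (Fin n))‖ := by
            have := norm_sub_norm_le ((y : EuclideanSpace ℝ (Fin n))) (-(t • v))
            rw [sub_neg_eq_add, norm_neg, add_comm] at this
            exact this
          have h2 : ‖t • v‖ ≤ |t₀| + 1 := by
            rw [norm_smul, hv, mul_one, Real.norm_eq_abs]
            have := abs_sub_abs_le_abs_sub t t₀
            linarith
          linarith
        have hnmem : y ∉ Metric.closedBall (0 : K) (Rf + |t₀| + 1) := by
          intro hmem
          have hle : ‖(y : EuclideanSpace ℝ (Fin n))‖ ≤ Rf + |t₀| + 1 :=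
            mem_closedBall_zero_iff.mp hmem
          linarith
        rw [hz, indicator_of_notMem hnmem]
        simp
    · exact ((integrable_indicator_iff measurableSet_closedBall).mpr
        ((integrableOn_const_iff).mpr (Or.inr (isCompact_closedBall _ _).measure_lt_top)))
    · refine .of_forall fun y => ((hfc.comp ?_).tendsto t₀)
      exact (continuous_id.smul continuous_const).add continuous_const
  have hgs : HasCompactSupport g := by
    apply HasCompactSupport.intro (isCompact_Icc (a := -Rf) (b := Rf))
    intro t ht
    have hts : Rf < |t| := by
      simp only [Set.mem_Icc, not_and_or, not_le] at ht
      rcases ht with h | h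
      · rw [abs_of_neg (by linarith)]; linarith
      · rw [abs_of_pos (by linarith)]; linarith
    have hzz : ∀ y : K, f (t • v + (y : EuclideanSpace ℝ (Fin n))) = 0 := by
      intro y
      apply hfzero
      have h1 := abs_real_inner_le_norm v (t • v + (y : EuclideanSpace ℝ (Fin n)))
      rw [hinner, hv, one_mul] at h1
      linarith
    rw [hgdef]
    simp only [hzz, integral_zero]
  have hg0 : g 0 = ∫ y : K, f y := by
    rw [hgdef]
    simp
  -- eventual equality of the integrals
  have hev : ∀ᶠ p : ℝ in nhdsWithin (-1) (Set.Ioi (-1)),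
      (∫ x, |(inner ℝ v x : ℝ)| ^ p * f x) = ∫ t, |t| ^ p * g t := by
    filter_upwards [eventually_mem_nhdsWithin] with p hp
    have hp' : (-1 : ℝ) < p := hp
    set F : EuclideanSpace ℝ (Fin n) → ℝ := fun x => |(inner ℝ v x : ℝ)| ^ p * f x with hFdef
    set F2 : ℝ × K → ℝ := fun z =>
      |z.1| ^ p * f (z.1 • v + (z.2 : EuclideanSpace ℝ (Fin n))) with hF2def
    have hF2meas : AEStronglyMeasurable F2 (volume : Measure (ℝ × K)) := by
      have hm1 : Measurable fun s : ℝ => |s| ^ p := by measurability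
      exact ((hm1.comp measurable_fst).mul
        (hfc.comp ((continuous_fst.smul continuous_const).add
          (continuous_subtype_val.comp continuous_snd))).measurable).aestronglyMeasurable
    have hF2int : Integrable F2 := by
      refine Integrable.mono' (g := fun z : ℝ × K =>
        ((Icc (-Rf) Rf).indicator (fun t => |t| ^ p) z.1)
          * ((Metric.closedBall (0 : K) (2 * Rf)).indicator (fun _ => Cf) z.2)) ?_ hF2meas ?_
      · rw [Measure.volume_eq_prod]
        exact Integrable.mul_prod
          ((integrable_indicator_iff measurableSet_Icc).mpr (integrableOn_abs_rpow hp' Rf))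
          ((integrable_indicator_iff measurableSet_closedBall).mpr
            ((integrableOn_const_iff).mpr (Or.inr (isCompact_closedBall _ _).measure_lt_top)))
      · refine .of_forall fun z => ?_
        have hnn : (0:ℝ) ≤ ((Icc (-Rf) Rf).indicator (fun t => |t| ^ p) z.1)
            * ((Metric.closedBall (0 : K) (2 * Rf)).indicator (fun _ => Cf) z.2) :=
          mul_nonneg
            (indicator_nonneg (fun _ _ => Real.rpow_nonneg (abs_nonneg _) _) _)
            (indicator_nonneg (fun _ _ => hCf0) _)
        by_cases hz : f (z.1 • v + (z.2 : EuclideanSpace ℝ (Fin n))) = 0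
        · rw [hF2def]
          simp only [hz, mul_zero, norm_zero]
          exact hnn
        · have hxlt : ‖z.1 • v + (z.2 : EuclideanSpace ℝ (Fin n))‖ < Rf := by
            by_contra hcon
            push_neg at hcon
            exact hz (hfzero _ hcon)
          have ht1 : |z.1| ≤ Rf := by
            have h1 := abs_real_inner_le_norm v (z.1 • v + (z.2 : EuclideanSpace ℝ (Fin n)))
            rw [hinner, hv, one_mul] at h1
            linarith
          have hy1 : ‖(z.2 : EuclideanSpace ℝ (Fin n))‖ ≤ 2 * Rf := by
            have hrew : (z.2 : EuclideanSpace ℝ (Fin n))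
                = (z.1 • v + (z.2 : EuclideanSpace ℝ (Fin n))) - z.1 • v := by abel
            rw [hrew]
            calc ‖(z.1 • v + (z.2 : EuclideanSpace ℝ (Fin n))) - z.1 • v‖
                ≤ ‖z.1 • v + (z.2 : EuclideanSpace ℝ (Fin n))‖ + ‖z.1 • v‖ := norm_sub_le _ _
              _ ≤ Rf + Rf := by
                  rw [norm_smul, hv, mul_one, Real.norm_eq_abs]
                  exact add_le_add hxlt.le ht1
              _ = 2 * Rf := by ring
          have hymem : z.2 ∈ Metric.closedBall (0 : K) (2 * Rf) :=
            mem_closedBall_zero_iff.mpr hy1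
          rw [indicator_of_mem (mem_Icc.mpr (abs_le.mp ht1)), indicator_of_mem hymem]
          rw [hF2def, Real.norm_eq_abs, abs_mul,
            abs_of_nonneg (Real.rpow_nonneg (abs_nonneg _) _)]
          exact mul_le_mul_of_nonneg_left (hCf _) (Real.rpow_nonneg (abs_nonneg _) _)
    have hcomp : F2 = F ∘ ⇑e := by
      funext z
      simp only [Function.comp_apply, hF2def, hFdef, he, hinner]
    calc (∫ x, F x)
        = ∫ z : ℝ × K, F (e z) := (hmp.integral_comp hemb F).symm
      _ = ∫ z : ℝ × K, F2 z := by rw [hcomp]; rfl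
      _ = ∫ t : ℝ, ∫ y : K, F2 (t, y) := by
          rw [Measure.volume_eq_prod] at hF2int ⊢
          exact integral_prod F2 hF2int
      _ = ∫ t : ℝ, |t| ^ p * g t := by
          refine integral_congr_ae (.of_forall fun t => ?_)
          show (∫ y : K, |t| ^ p * f (t • v + (y : EuclideanSpace ℝ (Fin n))))
            = |t| ^ p * ∫ y : K, f (t • v + (y : EuclideanSpace ℝ (Fin n)))
          exact integral_const_mul _ _
  -- conclusion
  have hone := tendsto_oneDim hgc hgs
  rw [hg0] at hone
  refine hone.congr' ?_
  filter_upwards [hev] with p hp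
  rw [hp]
end

section
/- Fix p > 0, α > 0 and n ≥ 1. Suppose that for all independent random vectors X, Y in ℝⁿ with finite p-Rényi entropies, N_p^α(X+Y) ≥ N_p^α(X) + N_p^α(Y). Then for all such X, Y and all λ ∈ (0,1) such that λ^{1/(2α)}X + (1-λ)^{1/(2α)}Y has finite p-Rényi entropy, h_p(λ^{1/(2α)} X + (1-λ)^{1/(2α)} Y) ≥ λ h_p(X) + (1-λ) h_p(Y). -/
open MeasureTheory ProbabilityTheory
open ENNReal

/-- The `p`-Rényi entropy of a random vector `X` in `ℝⁿ`, expressed via its pdf. -/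
noncomputable def renyiEntropy {Ω : Type*} [MeasurableSpace Ω] (P : Measure Ω)
    {n : ℕ} (p : ℝ) (X : Ω → EuclideanSpace ℝ (Fin n)) : ℝ :=
  (1 / (1 - p)) * Real.log (∫ x, (pdf X P volume x).toReal ^ p)

/-- `X` has a density and finite `p`-Rényi entropy. -/
def HasFiniteRenyi {Ω : Type*} [MeasurableSpace Ω] (P : Measure Ω)
    {n : ℕ} (p : ℝ) (X : Ω → EuclideanSpace ℝ (Fin n)) : Prop :=
  HasPDF X P volume ∧
    Integrable (fun x => (pdf X P volume x).toReal ^ p) volume ∧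
    0 < ∫ x, (pdf X P volume x).toReal ^ p

lemma map_smul_withDensity {n : ℕ} {c : ℝ} (hc : c ≠ 0)
    (f : EuclideanSpace ℝ (Fin n) → ℝ≥0∞) (hf : Measurable f) :
    Measure.map (fun x => c • x) (volume.withDensity f) =
      (Measure.map (fun x => c • x)
        (volume : Measure (EuclideanSpace ℝ (Fin n)))).withDensity
          (fun x => f (c⁻¹ • x)) := by
  ext s hs
  rw [Measure.map_apply (measurable_const_smul c) hs,
      withDensity_apply _ ((measurable_const_smul c) hs),
      withDensity_apply _ hs,
      setLIntegral_map (f := fun a => f (c⁻¹ • a)) hs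
        (hf.comp (measurable_const_smul c⁻¹) : ) (measurable_const_smul c)]
  refine lintegral_congr fun x => ?_
  simp [smul_smul, inv_mul_cancel₀ hc]

lemma map_smul_pdf {Ω : Type*} [MeasurableSpace Ω] {P : Measure Ω} {n : ℕ}
    {X : Ω → EuclideanSpace ℝ (Fin n)} (hX : HasPDF X P volume) {c : ℝ} (hc : 0 < c) :
    Measure.map (fun ω => c • X ω) P =
      volume.withDensity
        (fun x => ENNReal.ofReal ((c ^ n)⁻¹) * pdf X P volume (c⁻¹ • x)) := by
  haveI := hX
  have hXm : AEMeasurable X P := HasPDF.aemeasurable X P volume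
  have h1 : Measure.map (fun ω => c • X ω) P
      = Measure.map (fun x => c • x) (Measure.map X P) := by
    rw [AEMeasurable.map_map_of_aemeasurable (measurable_const_smul c).aemeasurable hXm]
    rfl
  rw [h1, map_eq_withDensity_pdf X P volume,
      map_smul_withDensity hc.ne' _ (measurable_pdf X P volume),
      Measure.map_addHaar_smul volume hc.ne', finrank_euclideanSpace_fin,
      withDensity_smul_measure,
      abs_of_nonneg (inv_nonneg.2 (pow_nonneg hc.le n)),
      ← withDensity_smul' _ _ ENNReal.ofReal_ne_top]
  rfl

lemma renyi_smul {Ω : Type*} [MeasurableSpace Ω] (P : Measure Ω) [IsProbabilityMeasure P]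
    {n : ℕ} {p : ℝ} (hp : 0 < p) {X : Ω → EuclideanSpace ℝ (Fin n)}
    (hX : HasFiniteRenyi P p X) {c : ℝ} (hc : 0 < c) :
    HasFiniteRenyi P p (fun ω => c • X ω) ∧
      (∫ x, (pdf (fun ω => c • X ω) P volume x).toReal ^ p) =
        ((c ^ n)⁻¹) ^ p * ((c ^ n) * (∫ x, (pdf X P volume x).toReal ^ p)) := by
  obtain ⟨hpdfX, hintX, hposX⟩ := hX
  haveI := hpdfX
  have hXm : AEMeasurable X P := HasPDF.aemeasurable X P volume
  have hmap := map_smul_pdf hpdfX hc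
  set g : EuclideanSpace ℝ (Fin n) → ℝ≥0∞ :=
    fun x => ENNReal.ofReal ((c ^ n)⁻¹) * pdf X P volume (c⁻¹ • x) with hg
  have hgm : Measurable g :=
    ((measurable_pdf X P volume).comp (measurable_const_smul c⁻¹)).const_mul _
  haveI hpdf' : HasPDF (fun ω => c • X ω) P volume :=
    hasPDF_of_map_eq_withDensity ((measurable_const_smul c).comp_aemeasurable hXm) g
      hgm.aemeasurable hmap
  have hae : pdf (fun ω => c • X ω) P volume =ᵐ[volume] g :=
    (pdf.eq_of_map_eq_withDensity g hgm.aemeasurable).1 hmap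
  -- pointwise: (g x).toReal ^ p = ((c^n)⁻¹)^p * ((pdf X (c⁻¹ • x)).toReal ^ p)
  have hpt : ∀ x, (g x).toReal ^ p
      = ((c ^ n)⁻¹) ^ p * ((pdf X P volume (c⁻¹ • x)).toReal ^ p) := by
    intro x
    rw [hg, ENNReal.toReal_mul, ENNReal.toReal_ofReal (inv_nonneg.2 (pow_nonneg hc.le n)),
        Real.mul_rpow (inv_nonneg.2 (pow_nonneg hc.le n)) ENNReal.toReal_nonneg]
  have haep : (fun x => (pdf (fun ω => c • X ω) P volume x).toReal ^ p)
      =ᵐ[volume] (fun x => ((c ^ n)⁻¹) ^ p * ((pdf X P volume (c⁻¹ • x)).toReal ^ p)) := by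
    filter_upwards [hae] with x hx
    rw [hx, hpt]
  have hint' : Integrable
      (fun x => ((c ^ n)⁻¹) ^ p * ((pdf X P volume (c⁻¹ • x)).toReal ^ p)) volume :=
    (hintX.comp_smul (inv_ne_zero hc.ne')).const_mul _
  have hI : (∫ x, (pdf (fun ω => c • X ω) P volume x).toReal ^ p)
      = ((c ^ n)⁻¹) ^ p * ((c ^ n) * (∫ x, (pdf X P volume x).toReal ^ p)) := by
    rw [integral_congr_ae haep, integral_const_mul,
        Measure.integral_comp_inv_smul volume (fun y => (pdf X P volume y).toReal ^ p) c,
        finrank_euclideanSpace_fin, abs_of_nonneg (pow_nonneg hc.le n), smul_eq_mul]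
  refine ⟨⟨hpdf', hint'.congr haep.symm, ?_⟩, hI⟩
  rw [hI]
  have h1 : (0:ℝ) < ((c ^ n)⁻¹) ^ p := Real.rpow_pos_of_pos (inv_pos.2 (pow_pos hc n)) p
  positivity

lemma renyiEntropy_smul {Ω : Type*} [MeasurableSpace Ω] (P : Measure Ω)
    [IsProbabilityMeasure P] {n : ℕ} {p : ℝ} (hp : 0 < p) (hp1 : p ≠ 1)
    {X : Ω → EuclideanSpace ℝ (Fin n)} (hX : HasFiniteRenyi P p X) {c : ℝ} (hc : 0 < c) :
    renyiEntropy P p (fun ω => c • X ω) = renyiEntropy P p X + n * Real.log c := by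
  obtain ⟨-, hI⟩ := renyi_smul P hp hX hc
  have hposX := hX.2.2
  have h1 : (0:ℝ) < ((c ^ n)⁻¹) ^ p := Real.rpow_pos_of_pos (inv_pos.2 (pow_pos hc n)) p
  have h2 : (0:ℝ) < (c ^ n : ℝ) := pow_pos hc n
  rw [renyiEntropy, renyiEntropy, hI, Real.log_mul h1.ne' (by positivity),
      Real.log_mul h2.ne' hposX.ne',
      Real.log_rpow (inv_pos.2 h2), Real.log_inv, Real.log_pow]
  have hne : (1 : ℝ) - p ≠ 0 := by
    intro h; apply hp1; linarith
  field_simp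
  ring


/-- If the Rényi EPI `N_p^α(X+Y) ≥ N_p^α(X) + N_p^α(Y)` holds for all independent
`X, Y` with finite `p`-Rényi entropies, then for all such `X, Y` and `λ ∈ (0,1)` with
`λ^{1/(2α)}X + (1-λ)^{1/(2α)}Y` of finite `p`-Rényi entropy,
`h_p(λ^{1/(2α)} X + (1-λ)^{1/(2α)} Y) ≥ λ h_p(X) + (1-λ) h_p(Y)`. -/
theorem stmt15 {Ω : Type*} [MeasurableSpace Ω] (P : Measure Ω) [IsProbabilityMeasure P]
    (n : ℕ) (hn : 1 ≤ n) (p α : ℝ) (hp : 0 < p) (hα : 0 < α)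
    (hyp : ∀ X Y : Ω → EuclideanSpace ℝ (Fin n), IndepFun X Y P →
      HasFiniteRenyi P p X → HasFiniteRenyi P p Y →
        Real.exp (2 * renyiEntropy P p X / n) ^ α +
            Real.exp (2 * renyiEntropy P p Y / n) ^ α ≤
          Real.exp (2 * renyiEntropy P p (fun ω => X ω + Y ω) / n) ^ α) :
    ∀ X Y : Ω → EuclideanSpace ℝ (Fin n), IndepFun X Y P →
      HasFiniteRenyi P p X → HasFiniteRenyi P p Y →
      ∀ l ∈ Set.Ioo (0 : ℝ) 1,
        HasFiniteRenyi P p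
          (fun ω => l ^ (1 / (2 * α)) • X ω + (1 - l) ^ (1 / (2 * α)) • Y ω) →
        l * renyiEntropy P p X + (1 - l) * renyiEntropy P p Y ≤
          renyiEntropy P p
            (fun ω => l ^ (1 / (2 * α)) • X ω + (1 - l) ^ (1 / (2 * α)) • Y ω) := by
  intro X Y hind hX hY l hl hS
  by_cases hp1 : p = 1
  · subst hp1
    simp [renyiEntropy, sub_self]
  obtain ⟨hl0, hl1⟩ := hl
  have hl1' : (0:ℝ) < 1 - l := by linarith
  set a := l ^ (1 / (2 * α)) with ha'
  set b := (1 - l) ^ (1 / (2 * α)) with hb'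
  have ha : 0 < a := Real.rpow_pos_of_pos hl0 _
  have hb : 0 < b := Real.rpow_pos_of_pos hl1' _
  have h2α : (2 * α) ≠ 0 := by positivity
  have hn0 : (n : ℝ) ≠ 0 := Nat.cast_ne_zero.2 (by omega)
  have hnpos : (0:ℝ) < n := by positivity
  have hXa : HasFiniteRenyi P p (fun ω => a • X ω) := (renyi_smul P hp hX ha).1
  have hYb : HasFiniteRenyi P p (fun ω => b • Y ω) := (renyi_smul P hp hY hb).1
  have hind' : IndepFun (fun ω => a • X ω) (fun ω => b • Y ω) P :=
    hind.comp (measurable_const_smul a) (measurable_const_smul b)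
  have key := hyp _ _ hind' hXa hYb
  have hEa := renyiEntropy_smul P hp hp1 hX ha
  have hEb := renyiEntropy_smul P hp hp1 hY hb
  have hal : a ^ (2 * α) = l := by
    rw [ha', ← Real.rpow_mul hl0.le, one_div, inv_mul_cancel₀ h2α, Real.rpow_one]
  have hbl : b ^ (2 * α) = 1 - l := by
    rw [hb', ← Real.rpow_mul hl1'.le, one_div, inv_mul_cancel₀ h2α, Real.rpow_one]
  have expand : ∀ h c : ℝ, 0 < c →
      Real.exp (2 * (h + n * Real.log c) / n) ^ α
        = Real.exp ((2 * α / n) * h) * c ^ (2 * α) := by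
    intro h c hc
    rw [← Real.exp_mul, Real.rpow_def_of_pos hc, ← Real.exp_add]
    congr 1
    field_simp
  have eC : ∀ h : ℝ, Real.exp (2 * h / n) ^ α = Real.exp ((2 * α / n) * h) := by
    intro h
    rw [← Real.exp_mul]
    congr 1
    ring
  rw [hEa, hEb, expand _ _ ha, expand _ _ hb, hal, hbl, eC] at key
  set h1 := renyiEntropy P p X
  set h2 := renyiEntropy P p Y
  have hg : Real.exp ((2 * α / n) * (l * h1 + (1 - l) * h2))
      ≤ Real.exp ((2 * α / n) * h1) ^ l * Real.exp ((2 * α / n) * h2) ^ (1 - l) := by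
    rw [← Real.exp_mul, ← Real.exp_mul, ← Real.exp_add]
    apply Real.exp_le_exp.mpr
    ring_nf
    exact le_refl _
  have hgm := Real.geom_mean_le_arith_mean2_weighted hl0.le hl1'.le
    (Real.exp_pos ((2 * α / n) * h1)).le (Real.exp_pos ((2 * α / n) * h2)).le
    (by ring)
  have hchain : Real.exp ((2 * α / n) * (l * h1 + (1 - l) * h2))
      ≤ Real.exp ((2 * α / n) * (renyiEntropy P p
          (fun ω => (fun ω => a • X ω) ω + (fun ω => b • Y ω) ω))) := by
    refine le_trans (le_trans hg hgm) ?_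
    linarith [key]
  have hle := Real.exp_le_exp.mp hchain
  have hfrac : (0:ℝ) < 2 * α / n := by positivity
  exact le_of_mul_le_mul_left hle hfrac
end
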